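/- Let c ≥ 0 and define the Kalman gain with measurement noise R = c·δ² by K_R(δ) = Q(δ)·H₁ᵀ·(H₁·Q(δ)·H₁ᵀ + c·δ²)⁻¹ ∈ ℝ². Then there exists C > 0, depending only on θ, η and c, such that for all 0 < δ ≤ 1: |K_R(δ)₀ − δ/2| ≤ C·δ² and |K_R(δ)₁ − 1| ≤ C·δ. -/

import Mathlib

open Matrix MeasureTheory Real

noncomputable section

/-- Drift matrix `F = [[0, 1], [0, −θ]]` of the integrated Ornstein–Uhlenbeck prior. -/
def Fmat (θ : ℝ) : Matrix (Fin 2) (Fin 2) ℝ := !![0, 1; 0, -θ]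

/-- Diffusion column vector `L = (0, η)ᵀ`. -/
def Lmat (η : ℝ) : Matrix (Fin 2) (Fin 1) ℝ := !![0; η]

/-- Noise covariance `Q(δ) = ∫₀^δ exp(sF)·L·Lᵀ·exp(sFᵀ) ds` (entrywise Bochner integral). -/
def Qmat (θ η δ : ℝ) : Matrix (Fin 2) (Fin 2) ℝ :=
  Matrix.of fun i j => ∫ s in (0:ℝ)..δ,
    (NormedSpace.exp (s • Fmat θ) * (Lmat η * (Lmat η)ᵀ) *
      NormedSpace.exp (s • (Fmat θ)ᵀ)) i j


/-- Observation row vector `H₁ = (0, 1)`. -/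
def H1row : Matrix (Fin 1) (Fin 2) ℝ := !![0, 1]

/-- Kalman gain `K_R(δ) = Q(δ)·H₁ᵀ·(H₁·Q(δ)·H₁ᵀ + c·δ²)⁻¹` with measurement noise `R = c·δ²`. -/
def KgainR (θ η c δ : ℝ) : Matrix (Fin 2) (Fin 1) ℝ :=
  Qmat θ η δ * H1rowᵀ * (H1row * Qmat θ η δ * H1rowᵀ + (c * δ ^ 2) • (1 : Matrix (Fin 1) (Fin 1) ℝ))⁻¹

open scoped Nat

/-! The drift satisfies `(s • F)² = (-θ s) • (s • F)`, so the exponential series collapses to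
`exp (s • F) = 1 + φ(-θ s) • (s • F)` with `φ a = (eᵃ - 1) / a = dslope exp 0 a`. Hence
`Q₀₁ = η² ∫₀^δ s φ(-θ s) e^{-θ s} ds` and `Q₁₁ = η² ∫₀^δ e^{-2θ s} ds ≥ η² e^{-2θ} δ`.
For `a ≤ 0` one has `eᵃ ≤ φ a ≤ 1`, so `Q₀₁ - (δ/2) Q₁₁` differs from the centred integral
`η² ∫₀^δ (s - δ/2) ds = 0` by `O(θ η² δ³)`. Dividing by `Q₁₁ + c δ² ≥ η² e^{-2θ} δ` gives both
estimates; the noise term `c δ²` only contributes `O(δ²)` and `O(δ)` respectively. -/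

theorem Real.summable_pow_div_factorial_succ (a : ℝ) :
    Summable fun n : ℕ => a ^ n / (n + 1)! := by
  refine .of_norm_bounded (Real.summable_pow_div_factorial |a|) fun n => ?_
  rw [Real.norm_eq_abs, abs_div, abs_pow, Nat.abs_cast]
  gcongr
  exact n.le_succ

theorem NormedSpace.exp_eq_one_add_smul_of_mul_self_eq_smul {𝔸 : Type*} [Ring 𝔸] [Algebra ℝ 𝔸]
    [TopologicalSpace 𝔸] [IsTopologicalRing 𝔸] [ContinuousSMul ℝ 𝔸] [T2Space 𝔸] {M : 𝔸} {a : ℝ}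
    (h : M * M = a • M) :
    NormedSpace.exp M = 1 + (∑' n : ℕ, a ^ n / (n + 1)!) • M := by
  have hpow : ∀ n : ℕ, M ^ (n + 1) = a ^ n • M := by
    intro n
    induction n with
    | zero => simp
    | succ n ih => rw [pow_succ, ih, smul_mul_assoc, h, smul_smul, pow_succ]
  have htail : HasSum (fun n : ℕ => ((n + 1)! : ℝ)⁻¹ • M ^ (n + 1))
      ((∑' n : ℕ, a ^ n / (n + 1)!) • M) := by
    simp_rw [hpow, smul_smul, ← div_eq_inv_mul]
    exact (Real.summable_pow_div_factorial_succ a).hasSum.smul_const M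
  rw [NormedSpace.exp_eq_tsum ℝ]
  have := HasSum.zero_add (f := fun n : ℕ => ((n ! : ℝ))⁻¹ • M ^ n) htail
  simpa using this.tsum_eq

theorem Real.tsum_pow_div_factorial_succ (a : ℝ) :
    ∑' n : ℕ, a ^ n / (n + 1)! = dslope Real.exp 0 a := by
  rcases eq_or_ne a 0 with rfl | ha
  · rw [dslope_same, Real.deriv_exp, Real.exp_zero, tsum_eq_single 0 fun n hn => by simp [hn]]
    simp
  · have h := NormedSpace.exp_eq_one_add_smul_of_mul_self_eq_smul (M := a) (smul_eq_mul a a).symm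
    rw [← Real.exp_eq_exp_ℝ, smul_eq_mul] at h
    have h' := sub_smul_dslope Real.exp 0 a
    rw [Real.exp_zero, sub_zero, smul_eq_mul] at h'
    exact mul_right_cancel₀ ha (by linarith)

theorem Real.continuous_dslope_exp_zero : Continuous (dslope Real.exp 0) :=
  continuousOn_univ.mp <| (continuousOn_dslope Filter.univ_mem).mpr
    ⟨Real.continuous_exp.continuousOn, Real.differentiableAt_exp⟩

theorem Real.exp_le_dslope_exp_zero {a : ℝ} (ha : a ≤ 0) : Real.exp a ≤ dslope Real.exp 0 a := by
  rcases ha.eq_or_lt with rfl | ha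
  · simp [dslope_same]
  rw [dslope_of_ne _ ha.ne, slope_def_field, Real.exp_zero, sub_zero, le_div_iff_of_neg ha]
  have hprod : Real.exp a * Real.exp (-a) = 1 := by
    rw [← Real.exp_add, add_neg_cancel, Real.exp_zero]
  nlinarith [Real.add_one_le_exp (-a), Real.exp_pos a]

theorem Real.dslope_exp_zero_le_one {a : ℝ} (ha : a ≤ 0) : dslope Real.exp 0 a ≤ 1 := by
  rcases ha.eq_or_lt with rfl | ha
  · simp [dslope_same]
  rw [dslope_of_ne _ ha.ne, slope_def_field, Real.exp_zero, sub_zero, div_le_iff_of_neg ha]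
  linarith [Real.add_one_le_exp a]

theorem Real.one_sub_two_mul_le_exp_neg_sq (x : ℝ) : 1 - 2 * x ≤ Real.exp (-x) ^ 2 := by
  rw [← Real.exp_nat_mul, Nat.cast_ofNat]
  linarith [Real.add_one_le_exp (2 * -x)]

theorem abs_div_add_mul_sq_sub_half_le {q₀ q₁ c δ m A C : ℝ} (hm : 0 < m) (hδ : 0 < δ)
    (hc : 0 ≤ c) (hq₁ : m * δ ≤ q₁) (hq₀ : |q₀ - δ / 2 * q₁| ≤ A * δ ^ 3)
    (hC : A + c / 2 ≤ C * m) :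
    |q₀ / (q₁ + c * δ ^ 2) - δ / 2| ≤ C * δ ^ 2 := by
  have hD : m * δ ≤ q₁ + c * δ ^ 2 := by nlinarith [mul_nonneg hc (sq_nonneg δ)]
  have hD₀ : 0 < q₁ + c * δ ^ 2 := (mul_pos hm hδ).trans_le hD
  have hA : 0 ≤ A := nonneg_of_mul_nonneg_left ((abs_nonneg _).trans hq₀) (by positivity)
  have hC₀ : 0 ≤ C := nonneg_of_mul_nonneg_left (by linarith) hm
  rw [div_sub' hD₀.ne', abs_div, abs_of_pos hD₀, div_le_iff₀ hD₀]
  calc |q₀ - (q₁ + c * δ ^ 2) * (δ / 2)|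
      = |(q₀ - δ / 2 * q₁) + -(c / 2 * δ ^ 3)| := by ring_nf
    _ ≤ A * δ ^ 3 + c / 2 * δ ^ 3 := by
      refine (abs_add_le _ _).trans (add_le_add hq₀ ?_)
      rw [abs_neg, abs_of_nonneg (by positivity)]
    _ ≤ C * δ ^ 2 * (m * δ) := by nlinarith [pow_pos hδ 3]
    _ ≤ C * δ ^ 2 * (q₁ + c * δ ^ 2) := by gcongr

theorem abs_div_add_mul_sq_sub_one_le {q₁ c δ m C : ℝ} (hm : 0 < m) (hδ : 0 < δ)
    (hc : 0 ≤ c) (hq₁ : m * δ ≤ q₁) (hC : c ≤ C * m) :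
    |q₁ / (q₁ + c * δ ^ 2) - 1| ≤ C * δ := by
  have hD : m * δ ≤ q₁ + c * δ ^ 2 := by nlinarith [mul_nonneg hc (sq_nonneg δ)]
  have hD₀ : 0 < q₁ + c * δ ^ 2 := (mul_pos hm hδ).trans_le hD
  have hC₀ : 0 ≤ C := nonneg_of_mul_nonneg_left (hc.trans hC) hm
  rw [div_sub_one hD₀.ne', abs_div, abs_of_pos hD₀, div_le_iff₀ hD₀, sub_add_cancel_left,
    abs_neg, abs_of_nonneg (by positivity)]
  calc c * δ ^ 2 ≤ C * δ * (m * δ) := by nlinarith [sq_nonneg δ]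
    _ ≤ C * δ * (q₁ + c * δ ^ 2) := by gcongr

theorem exp_smul_Fmat (θ s : ℝ) :
    NormedSpace.exp (s • Fmat θ) =
      !![1, s * dslope Real.exp 0 (-(θ * s)); 0, Real.exp (-(θ * s))] := by
  have hF : Fmat θ * Fmat θ = (-θ) • Fmat θ := by
    ext i j
    fin_cases i <;> fin_cases j <;> simp [Fmat, Matrix.mul_apply]
  have hsq : s • Fmat θ * s • Fmat θ = (-(θ * s)) • s • Fmat θ := by
    rw [smul_mul_smul_comm, hF, smul_smul, smul_smul]
    ring_nf
  have hslope := sub_smul_dslope Real.exp 0 (-(θ * s))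
  rw [sub_zero, Real.exp_zero, smul_eq_mul] at hslope
  rw [NormedSpace.exp_eq_one_add_smul_of_mul_self_eq_smul hsq, Real.tsum_pow_div_factorial_succ]
  ext i j
  fin_cases i <;> fin_cases j <;> simp [Fmat] <;> linarith

theorem exp_smul_Fmat_mul_Lmat_mul_transpose (θ η s : ℝ) :
    NormedSpace.exp (s • Fmat θ) * (Lmat η * (Lmat η)ᵀ) * NormedSpace.exp (s • (Fmat θ)ᵀ) =
      η ^ 2 • Matrix.vecMulVec ![s * dslope Real.exp 0 (-(θ * s)), Real.exp (-(θ * s))]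
        ![s * dslope Real.exp 0 (-(θ * s)), Real.exp (-(θ * s))] := by
  have hL : Lmat η * (Lmat η)ᵀ = !![0, 0; 0, η ^ 2] := by
    ext i j
    fin_cases i <;> fin_cases j <;> simp [Lmat, Matrix.mul_apply, sq]
  rw [← Matrix.transpose_smul, Matrix.exp_transpose, exp_smul_Fmat, hL]
  ext i j
  fin_cases i <;> fin_cases j <;> simp [Matrix.mul_apply, Matrix.vecMulVec] <;> ring

theorem Qmat_zero_one (θ η δ : ℝ) :
    Qmat θ η δ 0 1 =
      η ^ 2 * ∫ s in (0:ℝ)..δ, s * dslope Real.exp 0 (-(θ * s)) * Real.exp (-(θ * s)) := by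
  simp [Qmat, exp_smul_Fmat_mul_Lmat_mul_transpose, Matrix.vecMulVec]

theorem Qmat_one_one (θ η δ : ℝ) :
    Qmat θ η δ 1 1 = η ^ 2 * ∫ s in (0:ℝ)..δ, Real.exp (-(θ * s)) ^ 2 := by
  simp [Qmat, exp_smul_Fmat_mul_Lmat_mul_transpose, Matrix.vecMulVec, sq]

theorem KgainR_apply (θ η c δ : ℝ) (i : Fin 2) :
    KgainR θ η c δ i 0 = Qmat θ η δ i 1 / (Qmat θ η δ 1 1 + c * δ ^ 2) := by
  simp [KgainR, H1row, Matrix.mul_apply, Matrix.vecMul, dotProduct, div_eq_mul_inv]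

theorem Qmat_one_one_ge {θ δ : ℝ} (η : ℝ) (hθ : 0 ≤ θ) (hδ : 0 ≤ δ) (hδ₁ : δ ≤ 1) :
    η ^ 2 * Real.exp (-(2 * θ)) * δ ≤ Qmat θ η δ 1 1 := by
  have hle : ∀ s ∈ Set.Icc (0 : ℝ) δ, Real.exp (-(2 * θ)) ≤ Real.exp (-(θ * s)) ^ 2 := by
    rintro s ⟨-, hs⟩
    rw [← Real.exp_nat_mul, Nat.cast_ofNat, Real.exp_le_exp]
    nlinarith [mul_le_mul_of_nonneg_left (hs.trans hδ₁) hθ]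
  have hcont : Continuous fun s : ℝ => Real.exp (-(θ * s)) ^ 2 := by fun_prop
  have hint := intervalIntegral.integral_mono_on hδ intervalIntegrable_const
    (hcont.intervalIntegrable (μ := volume) 0 δ) hle
  rw [intervalIntegral.integral_const, smul_eq_mul, sub_zero] at hint
  rw [Qmat_one_one, mul_assoc, mul_comm _ δ]
  exact mul_le_mul_of_nonneg_left hint (sq_nonneg η)

theorem abs_Qmat_integrand_sub_le {θ δ s : ℝ} (hθ : 0 ≤ θ) (hs : 0 ≤ s) (hsδ : s ≤ δ) :
    |s * dslope Real.exp 0 (-(θ * s)) * Real.exp (-(θ * s)) - δ / 2 * Real.exp (-(θ * s)) ^ 2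
      - (s - δ / 2)| ≤ 3 * θ * δ ^ 2 := by
  set f := Real.exp (-(θ * s))
  set g := dslope Real.exp 0 (-(θ * s))
  have hθs : 0 ≤ θ * s := mul_nonneg hθ hs
  have hf₀ : 0 ≤ f := (Real.exp_pos _).le
  have hf₁ : f ≤ 1 := Real.exp_le_one_iff.mpr (by linarith)
  have hg₀ : f ≤ g := Real.exp_le_dslope_exp_zero (by linarith)
  have hg₁ : g ≤ 1 := Real.dslope_exp_zero_le_one (by linarith)
  have hff : 1 - 2 * (θ * s) ≤ f ^ 2 := Real.one_sub_two_mul_le_exp_neg_sq _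
  have hδ : 0 ≤ δ := hs.trans hsδ
  have hlow : -(2 * θ * δ ^ 2) ≤ s * (g * f - 1) := by
    have hθss : θ * s * s ≤ θ * δ * δ := by gcongr
    nlinarith [mul_le_mul_of_nonneg_right hg₀ hf₀]
  have hupp : s * (g * f - 1) ≤ 0 :=
    mul_nonpos_of_nonneg_of_nonpos hs (by nlinarith [mul_le_mul hg₁ hf₁ hf₀ zero_le_one])
  have hsq : δ / 2 * (1 - f ^ 2) ≤ θ * δ ^ 2 := by
    nlinarith [mul_le_mul_of_nonneg_left (by linarith : 1 - f ^ 2 ≤ 2 * (θ * s)) hδ,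
      mul_le_mul_of_nonneg_left hsδ (mul_nonneg hθ hδ)]
  have hsq₀ : 0 ≤ δ / 2 * (1 - f ^ 2) := mul_nonneg (by positivity) (by nlinarith)
  have hθδ : 0 ≤ θ * δ ^ 2 := by positivity
  rw [show s * g * f - δ / 2 * f ^ 2 - (s - δ / 2) = s * (g * f - 1) + δ / 2 * (1 - f ^ 2) by ring,
    abs_le]
  constructor <;> linarith

theorem abs_Qmat_zero_one_sub_le {θ δ : ℝ} (η : ℝ) (hθ : 0 ≤ θ) (hδ : 0 ≤ δ) :
    |Qmat θ η δ 0 1 - δ / 2 * Qmat θ η δ 1 1| ≤ 3 * θ * η ^ 2 * δ ^ 3 := by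
  set f : ℝ → ℝ := fun s => Real.exp (-(θ * s))
  set g : ℝ → ℝ := fun s => dslope Real.exp 0 (-(θ * s))
  have hg : Continuous g := Real.continuous_dslope_exp_zero.comp (by fun_prop)
  have hcentred : ∫ s in (0:ℝ)..δ, (s - δ / 2) = 0 := by
    rw [intervalIntegral.integral_sub intervalIntegral.intervalIntegrable_id
      intervalIntegrable_const, integral_id, intervalIntegral.integral_const, smul_eq_mul]
    ring
  have hdiff : Qmat θ η δ 0 1 - δ / 2 * Qmat θ η δ 1 1 =
      η ^ 2 * ∫ s in (0:ℝ)..δ, (s * g s * f s - δ / 2 * f s ^ 2 - (s - δ / 2)) := by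
    rw [Qmat_zero_one, Qmat_one_one, intervalIntegral.integral_sub, intervalIntegral.integral_sub,
      hcentred, intervalIntegral.integral_const_mul]
    · ring
    all_goals exact Continuous.intervalIntegrable (by fun_prop) _ _
  have hbound : ∀ s ∈ Set.uIoc (0 : ℝ) δ,
      ‖s * g s * f s - δ / 2 * f s ^ 2 - (s - δ / 2)‖ ≤ 3 * θ * δ ^ 2 := by
    intro s hs
    rw [Set.uIoc_of_le hδ] at hs
    exact abs_Qmat_integrand_sub_le hθ hs.1.le hs.2
  calc |Qmat θ η δ 0 1 - δ / 2 * Qmat θ η δ 1 1|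
      ≤ η ^ 2 * (3 * θ * δ ^ 2 * |δ - 0|) := by
        rw [hdiff, abs_mul, abs_of_nonneg (sq_nonneg η)]
        gcongr
        exact intervalIntegral.norm_integral_le_of_norm_le_const hbound
    _ = 3 * θ * η ^ 2 * δ ^ 3 := by rw [sub_zero, abs_of_nonneg hδ]; ring

/-- With measurement noise `R = c·δ²`, the Kalman gain of the one-step EKF0 with IOUP prior
satisfies `K₀ = δ/2 + O(δ²)` and `K₁ = 1 + O(δ)`, with a constant depending only on
`θ`, `η` and `c`. -/
theorem ekf0_kalman_gain_noisy (θ η c : ℝ) (hθ : 0 ≤ θ) (hη : 0 < η) (hc : 0 ≤ c) :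
    ∃ C : ℝ, 0 < C ∧ ∀ δ : ℝ, 0 < δ → δ ≤ 1 →
      |KgainR θ η c δ 0 0 - δ / 2| ≤ C * δ ^ 2 ∧
      |KgainR θ η c δ 1 0 - 1| ≤ C * δ := by
  set m := η ^ 2 * Real.exp (-(2 * θ))
  have hm : 0 < m := by positivity
  set C := (3 * θ * η ^ 2 + c) / m + 1
  have hCm : 3 * θ * η ^ 2 + c ≤ C * m := by
    rw [add_mul, div_mul_cancel₀ _ hm.ne']
    linarith
  refine ⟨C, by positivity, fun δ hδ hδ₁ => ?_⟩
  have hQ₁₁ := Qmat_one_one_ge η hθ hδ.le hδ₁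
  rw [KgainR_apply, KgainR_apply]
  exact ⟨abs_div_add_mul_sq_sub_half_le hm hδ hc hQ₁₁ (abs_Qmat_zero_one_sub_le η hθ hδ.le)
      (by linarith), abs_div_add_mul_sq_sub_one_le hm hδ hc hQ₁₁
      ((le_add_of_nonneg_left (by positivity)).trans hCm)⟩
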